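/- arXiv:2406.17466 — 4 statements merged into one kernel-verified Lean document; each statement's English description precedes it below -/
import Mathlib

section
/- Let q1, q2 ≤ q3 be positive integers, and let E1 (q3×q1) and E2 (q3×q2) be real matrices with E1ᵗE1 = Id_{q1}, E2ᵗE2 = Id_{q2}, and such that the projections E1E1ᵗ and E2E2ᵗ commute: E1E1ᵗE2E2ᵗ = E2E2ᵗE1E1ᵗ. Let M be a real q3×q3 matrix satisfying E2E2ᵗME2 = ME2, and let N be a real q3×q3 matrix such that E1ᵗNE1 and E2ᵗME2 are invertible. Then (E1ᵗNE1)⁻¹ · (E1ᵗME2) · (E2ᵗME2)⁻¹ · (Id_{q2} − E2ᵗE1E1ᵗE2) equals the zero q1×q2 matrix. -/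
open Matrix

/-- The core matrix identity of the mixed pairwise independence
lemma (Appendix B): for non-nested submodels with commuting projections and the
structural condition `E2E2ᵗME2 = ME2`, the covariance matrix
`(E1ᵗNE1)⁻¹ (E1ᵗME2) (E2ᵗME2)⁻¹ (Id − E2ᵗE1E1ᵗE2)` vanishes. -/
theorem stmt1 (q1 q2 q3 : ℕ) (hq1 : 0 < q1) (hq2 : 0 < q2) (hq3 : 0 < q3)
    (h13 : q1 ≤ q3) (h23 : q2 ≤ q3)
    (E1 : Matrix (Fin q3) (Fin q1) ℝ) (E2 : Matrix (Fin q3) (Fin q2) ℝ)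
    (hE1 : E1ᵀ * E1 = 1) (hE2 : E2ᵀ * E2 = 1)
    (hcomm : E1 * E1ᵀ * (E2 * E2ᵀ) = E2 * E2ᵀ * (E1 * E1ᵀ))
    (M N : Matrix (Fin q3) (Fin q3) ℝ)
    (hM : E2 * E2ᵀ * M * E2 = M * E2)
    (hN : IsUnit (E1ᵀ * N * E1)) (hMinv : IsUnit (E2ᵀ * M * E2)) :
    (E1ᵀ * N * E1)⁻¹ * (E1ᵀ * M * E2) * (E2ᵀ * M * E2)⁻¹ *
      (1 - E2ᵀ * E1 * E1ᵀ * E2) = 0 := by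
  have hdet : IsUnit (E2ᵀ * M * E2).det := (isUnit_iff_isUnit_det _).mp hMinv
  have hinv : (E2ᵀ * M * E2) * (E2ᵀ * M * E2)⁻¹ = 1 := Matrix.mul_nonsing_inv _ hdet
  have h1 : M * E2 = E2 * (E2ᵀ * (M * E2)) := by
    conv_lhs => rw [← hM]
    simp only [Matrix.mul_assoc]
  have h2 : E1ᵀ * M * E2 * (E2ᵀ * M * E2)⁻¹ = E1ᵀ * E2 := by
    have : E1ᵀ * M * E2 * (E2ᵀ * M * E2)⁻¹
        = E1ᵀ * E2 * ((E2ᵀ * M * E2) * (E2ᵀ * M * E2)⁻¹) := by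
      conv_lhs => rw [Matrix.mul_assoc E1ᵀ M E2, Matrix.mul_assoc E1ᵀ (M * E2), h1]
      simp only [Matrix.mul_assoc]
    rw [this, hinv, Matrix.mul_one]
  have h3 : E1ᵀ * E2 * (E2ᵀ * E1 * E1ᵀ * E2) = E1ᵀ * E2 := by
    have e : E1ᵀ * E2 * (E2ᵀ * E1 * E1ᵀ * E2) = E1ᵀ * (E2 * E2ᵀ * (E1 * E1ᵀ)) * E2 := by
      simp only [Matrix.mul_assoc]
    rw [e, ← hcomm]
    calc E1ᵀ * (E1 * E1ᵀ * (E2 * E2ᵀ)) * E2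
        = (E1ᵀ * E1) * (E1ᵀ * E2 * (E2ᵀ * E2)) := by simp only [Matrix.mul_assoc]
      _ = E1ᵀ * E2 := by rw [hE1, hE2, Matrix.one_mul, Matrix.mul_one]
  calc (E1ᵀ * N * E1)⁻¹ * (E1ᵀ * M * E2) * (E2ᵀ * M * E2)⁻¹ * (1 - E2ᵀ * E1 * E1ᵀ * E2)
      = (E1ᵀ * N * E1)⁻¹ * (E1ᵀ * M * E2 * (E2ᵀ * M * E2)⁻¹ * (1 - E2ᵀ * E1 * E1ᵀ * E2)) := by
        simp only [Matrix.mul_assoc]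
    _ = (E1ᵀ * N * E1)⁻¹ * (E1ᵀ * E2 - E1ᵀ * E2 * (E2ᵀ * E1 * E1ᵀ * E2)) := by
        rw [h2, Matrix.mul_sub, Matrix.mul_one]
    _ = 0 := by rw [h3, sub_self, Matrix.mul_zero]
end

section
/- Let (Ω, ℱ, P) be a probability space, p ≥ 2 an integer, and 0 ≤ α ≤ 1. Let A_1, …, A_p be mutually independent events all having the same probability. For each integer r with 2 ≤ r ≤ p and each pair 1 ≤ j < k ≤ p, let B_{jk,r} be an event with P(B_{jk,r}) ≤ 2α/(r(r−1)) such that B_{jk,r} is independent of the σ-algebra generated by A_1, …, A_p. Define R(ω) = #{ j : ω ∈ A_j }. Then P( ⋃_{1 ≤ j < k ≤ p} ( A_j ∩ A_k ∩ { ω : R(ω) ≥ 2 and ω ∈ B_{jk,R(ω)} } ) ) ≤ α. -/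
/-!
On the event `{R = r}` with `r ≥ 2` exactly `r.choose 2` pairs can be rejected, each at the
Bonferroni level `α / r.choose 2`.  The event `{R = r}` is determined by the screening events,
which are independent of the rejection events, so the probability of a rejection together with
`R = r` is at most `α · P(R = r)`; summing over the disjoint events `{R = r}` gives `α`.
-/

open scoped Classical

open MeasureTheory ProbabilityTheory Finset ENNReal

section

variable {Ω : Type*}

lemma measurable_card_filter_mem {m : MeasurableSpace Ω} {ι : Type*} [Fintype ι]
    {A : ι → Set Ω} (hA : ∀ j, MeasurableSet (A j)) :
    Measurable fun ω => #{j | ω ∈ A j} := by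
  simp_rw [card_filter]
  exact Finset.measurable_sum _ fun j _ => Measurable.ite (hA j) measurable_const measurable_const

variable [MeasurableSpace Ω] {μ : Measure Ω}

lemma sum_measure_inter_eq_card_mul {ι : Type*} (t : Finset ι) {s : ι → Set Ω}
    [∀ ω, DecidablePred fun i => ω ∈ s i] (hs : ∀ i ∈ t, MeasurableSet (s i)) {E : Set Ω}
    (hE : MeasurableSet E) {n : ℕ} (hn : ∀ ω ∈ E, #{i ∈ t | ω ∈ s i} = n) :
    ∑ i ∈ t, μ (s i ∩ E) = n * μ E :=
  calc ∑ i ∈ t, μ (s i ∩ E) = ∑ i ∈ t, ∫⁻ ω in E, (s i).indicator 1 ω ∂μ :=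
        sum_congr rfl fun i hi => by
          rw [lintegral_indicator_one (hs i hi), Measure.restrict_apply (hs i hi)]
    _ = ∫⁻ ω in E, (#{i ∈ t | ω ∈ s i} : ℝ≥0∞) ∂μ := by
        rw [← lintegral_finsetSum _ fun i hi => measurable_one.indicator (hs i hi)]
        simp [Set.indicator_apply]
    _ = ∫⁻ _ in E, (n : ℝ≥0∞) ∂μ := setLIntegral_congr_fun hE fun ω hω => by rw [hn ω hω]
    _ = n * μ E := setLIntegral_const E n

lemma measure_biUnion_le_of_le_mul_measure_fiber [IsProbabilityMeasure μ] {β : Type*}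
    [MeasurableSpace β] [MeasurableSingletonClass β] {R : Ω → β} (hR : Measurable R)
    (s : Finset β) {F : β → Set Ω} {a : ℝ≥0∞} (hF : ∀ b ∈ s, μ (F b) ≤ a * μ (R ⁻¹' {b})) :
    μ (⋃ b ∈ s, F b) ≤ a :=
  calc μ (⋃ b ∈ s, F b) ≤ ∑ b ∈ s, a * μ (R ⁻¹' {b}) :=
        (measure_biUnion_finset_le s F).trans (sum_le_sum hF)
    _ = a * μ (R ⁻¹' s) := by
        rw [← mul_sum, sum_measure_preimage_singleton s fun b _ => hR (measurableSet_singleton b)]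
    _ ≤ a := mul_le_of_le_one_right' prob_le_one

end

lemma sum_measure_inter_inter_indep_le {Ω : Type*} {m mΩ : MeasurableSpace Ω}
    {μ : Measure[mΩ] Ω} (hm : m ≤ mΩ) {ι : Type*} (t : Finset ι) {G B : ι → Set Ω}
    [∀ ω, DecidablePred fun i => ω ∈ G i] (hG : ∀ i ∈ t, MeasurableSet[m] (G i)) {E : Set Ω}
    (hE : MeasurableSet[m] E) {n : ℕ} (hn : ∀ ω ∈ E, #{i ∈ t | ω ∈ G i} = n)
    (hB : ∀ i ∈ t, Indep m (MeasurableSpace.generateFrom {B i}) μ) {c : ℝ≥0∞}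
    (hBc : ∀ i ∈ t, μ (B i) ≤ c) :
    ∑ i ∈ t, μ (G i ∩ E ∩ B i) ≤ n * μ E * c :=
  calc ∑ i ∈ t, μ (G i ∩ E ∩ B i) = ∑ i ∈ t, μ (G i ∩ E) * μ (B i) :=
        sum_congr rfl fun i hi => (Indep_iff _ _ μ).mp (hB i hi) _ _ ((hG i hi).inter hE)
          (MeasurableSpace.measurableSet_generateFrom rfl)
    _ ≤ ∑ i ∈ t, μ (G i ∩ E) * c := by gcongr with i hi; exact hBc i hi
    _ = n * μ E * c := by
        rw [← sum_mul, sum_measure_inter_eq_card_mul t (fun i hi => hm _ (hG i hi)) (hm _ hE) hn]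

lemma card_filter_lt_filter_mem_inter {Ω ι : Type*} [Fintype ι] [LinearOrder ι]
    (A : ι → Set Ω) (ω : Ω) :
    #{q ∈ ({q | q.1 < q.2} : Finset (ι × ι)) | ω ∈ A q.1 ∩ A q.2} =
      (#{j | ω ∈ A j}).choose 2 := by
  rw [← card_product_filter_lt]
  congr 1
  ext q
  simp only [mem_filter, mem_univ, true_and, Set.mem_inter_iff, mem_product]
  tauto

lemma choose_two_mul_ofReal_bonferroni_level {r : ℕ} (hr : 2 ≤ r) (α : ℝ) :
    (r.choose 2 : ℝ≥0∞) * ENNReal.ofReal (2 * α / (r * (r - 1))) = ENNReal.ofReal α := by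
  rw [← ENNReal.ofReal_natCast, ← ENNReal.ofReal_mul (Nat.cast_nonneg _), Nat.cast_choose_two]
  have hr : (2 : ℝ) ≤ r := by exact_mod_cast hr
  have hr0 : (r : ℝ) ≠ 0 := by linarith
  have hr1 : (r : ℝ) - 1 ≠ 0 := by linarith
  congr 1
  field_simp

theorem stmt2_general {Ω : Type*} [MeasurableSpace Ω] (P : Measure Ω) [IsProbabilityMeasure P]
    (p : ℕ) (α : ℝ)
    (A : Fin p → Set Ω) (hAmeas : ∀ j, MeasurableSet (A j))
    (B : Fin p → Fin p → ℕ → Set Ω)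
    (hBprob : ∀ (j k : Fin p), j < k → ∀ r : ℕ, 2 ≤ r → r ≤ p →
      P (B j k r) ≤ ENNReal.ofReal (2 * α / (r * (r - 1))))
    (hBindep : ∀ (j k : Fin p), j < k → ∀ r : ℕ, 2 ≤ r → r ≤ p →
      Indep (MeasurableSpace.generateFrom (Set.range A))
        (MeasurableSpace.generateFrom {B j k r}) P)
    (R : Ω → ℕ) (hR : ∀ ω, R ω = (Finset.univ.filter (fun j => ω ∈ A j)).card) :
    P (⋃ (j : Fin p) (k : Fin p) (_ : j < k),
        A j ∩ A k ∩ {ω | 2 ≤ R ω ∧ ω ∈ B j k (R ω)}) ≤ ENNReal.ofReal α := by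
  have hAgen : ∀ j, MeasurableSet[MeasurableSpace.generateFrom (Set.range A)] (A j) :=
    fun j => MeasurableSpace.measurableSet_generateFrom (Set.mem_range_self j)
  have hRA : R = fun ω => #{j | ω ∈ A j} := funext hR
  have hRgen : Measurable[MeasurableSpace.generateFrom (Set.range A)] R :=
    hRA ▸ measurable_card_filter_mem hAgen
  have hRmeas : Measurable R := hRA ▸ measurable_card_filter_mem hAmeas
  let pairs : Finset (Fin p × Fin p) := {q | q.1 < q.2}
  have hpairs : ∀ q ∈ pairs, q.1 < q.2 := fun q hq => by simpa [pairs] using hq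
  have hslice : ∀ r ∈ Icc 2 p, ∑ q ∈ pairs, P (A q.1 ∩ A q.2 ∩ R ⁻¹' {r} ∩ B q.1 q.2 r) ≤
      ENNReal.ofReal α * P (R ⁻¹' {r}) := by
    intro r hr
    obtain ⟨hr2, hrp⟩ := mem_Icc.mp hr
    calc _ ≤ r.choose 2 * P (R ⁻¹' {r}) * ENNReal.ofReal (2 * α / (r * (r - 1))) :=
          sum_measure_inter_inter_indep_le
            (MeasurableSpace.generateFrom_le (Set.forall_mem_range.mpr hAmeas)) pairs
            (fun q _ => (hAgen q.1).inter (hAgen q.2)) (hRgen (measurableSet_singleton r))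
            (fun ω hω => by
              rw [← Set.mem_singleton_iff.mp hω, hR, card_filter_lt_filter_mem_inter])
            (fun q hq => hBindep _ _ (hpairs q hq) r hr2 hrp)
            (fun q hq => hBprob _ _ (hpairs q hq) r hr2 hrp)
      _ = _ := by rw [mul_right_comm, choose_two_mul_ofReal_bonferroni_level hr2]
  have hcover : (⋃ (j : Fin p) (k : Fin p) (_ : j < k),
        A j ∩ A k ∩ {ω | 2 ≤ R ω ∧ ω ∈ B j k (R ω)}) ⊆
      ⋃ r ∈ Icc 2 p, ⋃ q ∈ pairs, A q.1 ∩ A q.2 ∩ R ⁻¹' {r} ∩ B q.1 q.2 r := by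
    simp only [Set.subset_def, Set.mem_iUnion]
    rintro ω ⟨j, k, hjk, ⟨hj, hk⟩, h2, hB⟩
    have hRp : R ω ≤ p := (hR ω).trans_le (card_le_univ _ |>.trans_eq (Fintype.card_fin p))
    exact ⟨R ω, mem_Icc.mpr ⟨h2, hRp⟩, (j, k), by simpa [pairs] using hjk, ⟨⟨hj, hk⟩, rfl⟩, hB⟩
  exact (measure_mono hcover).trans <| measure_biUnion_le_of_le_mul_measure_fiber hRmeas _
    fun r hr => (measure_biUnion_finset_le _ _).trans (hslice r hr)

/-- FWER control of the two-stage testing procedure (Appendix C).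
`A j` is the event that covariate `j` passes the screening stage (mutually
independent, all with the same probability), `R ω` is the number of selected
covariates, and `B j k r` is the second-stage rejection event for the pair
`(j,k)` when `r` covariates were selected, with Bonferroni level
`2α/(r(r−1))` and independent of the σ-algebra generated by the `A j`'s.
The probability of at least one second-stage rejection is at most `α`. -/
theorem stmt2 {Ω : Type*} [MeasurableSpace Ω] (P : Measure Ω) [IsProbabilityMeasure P]
    (p : ℕ) (hp : 2 ≤ p) (α : ℝ) (hα0 : 0 ≤ α) (hα1 : α ≤ 1)
    (A : Fin p → Set Ω) (hAmeas : ∀ j, MeasurableSet (A j))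
    (hAindep : iIndepSet A P)
    (hAsame : ∀ j k, P (A j) = P (A k))
    (B : Fin p → Fin p → ℕ → Set Ω)
    (hBmeas : ∀ j k r, MeasurableSet (B j k r))
    (hBprob : ∀ (j k : Fin p), j < k → ∀ r : ℕ, 2 ≤ r → r ≤ p →
      P (B j k r) ≤ ENNReal.ofReal (2 * α / (r * (r - 1))))
    (hBindep : ∀ (j k : Fin p), j < k → ∀ r : ℕ, 2 ≤ r → r ≤ p →
      Indep (MeasurableSpace.generateFrom (Set.range A))
        (MeasurableSpace.generateFrom {B j k r}) P)
    (R : Ω → ℕ) (hR : ∀ ω, R ω = (Finset.univ.filter (fun j => ω ∈ A j)).card) :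
    P (⋃ (j : Fin p) (k : Fin p) (_ : j < k),
        A j ∩ A k ∩ {ω | 2 ≤ R ω ∧ ω ∈ B j k (R ω)}) ≤ ENNReal.ofReal α :=
  stmt2_general P p α A hAmeas B hBprob hBindep R hR
end

section
/- Let n, p1, p2 be positive integers with p1 ≤ p2, let Z1 be a real p1×n matrix and Z3 a real (p2−p1)×n matrix, and let Z2 be the p2×n matrix obtained by stacking Z1 on top of Z3. Assume Z1Z1ᵗ and Z2Z2ᵗ are invertible. Then the last p2−p1 columns of the p1×p2 matrix (Z1Z1ᵗ)⁻¹ Z1 Z2ᵗ (Z2Z2ᵗ)⁻¹ are all zero. -/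
open Matrix

/-! Stacking `Z1` on `Z3` means `Z1 = [1 0] Z2`, hence
`Z1 Z2ᵀ (Z2 Z2ᵀ)⁻¹ = [1 0] (Z2 Z2ᵀ) (Z2 Z2ᵀ)⁻¹ = [1 0]`, whose `Z3`-columns vanish; left
multiplication by `(Z1 Z1ᵀ)⁻¹` keeps them zero. -/

section

variable {R m₁ m₂ n : Type*}

theorem Matrix.fromCols_one_zero_mul_fromRows [Semiring R] [Fintype m₁] [Fintype m₂]
    [DecidableEq m₁] (Z₁ : Matrix m₁ n R) (Z₃ : Matrix m₂ n R) :
    fromCols 1 (0 : Matrix m₁ m₂ R) * fromRows Z₁ Z₃ = Z₁ :=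
  (fromCols_mul_fromRows _ _ _ _).trans (by rw [Matrix.one_mul, Matrix.zero_mul, add_zero])

variable [CommRing R] [Fintype m₂] [Fintype n] [DecidableEq m₂]

theorem Matrix.mul_mul_transpose_mul_inv_of_isUnit (E : Matrix m₁ m₂ R) (Z : Matrix m₂ n R)
    (h : IsUnit (Z * Zᵀ)) : E * Z * Zᵀ * (Z * Zᵀ)⁻¹ = E := by
  rw [Matrix.mul_assoc E, Matrix.mul_assoc E,
    mul_nonsing_inv _ ((isUnit_iff_isUnit_det _).mp h), Matrix.mul_one]

theorem Matrix.mul_transpose_fromRows_mul_inv [Fintype m₁] [DecidableEq m₁]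
    (Z₁ : Matrix m₁ n R) (Z₃ : Matrix m₂ n R)
    (h : IsUnit (fromRows Z₁ Z₃ * (fromRows Z₁ Z₃)ᵀ)) :
    Z₁ * (fromRows Z₁ Z₃)ᵀ * (fromRows Z₁ Z₃ * (fromRows Z₁ Z₃)ᵀ)⁻¹ = fromCols 1 0 := by
  nth_rewrite 1 [← fromCols_one_zero_mul_fromRows Z₁ Z₃]
  exact mul_mul_transpose_mul_inv_of_isUnit _ _ h

end

theorem stmt6_general (n p1 p2 : ℕ)
    (Z1 : Matrix (Fin p1) (Fin n) ℝ) (Z3 : Matrix (Fin (p2 - p1)) (Fin n) ℝ)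
    (Z2 : Matrix (Fin p1 ⊕ Fin (p2 - p1)) (Fin n) ℝ) (hZ2 : Z2 = Matrix.fromRows Z1 Z3)
    (hZ2inv : IsUnit (Z2 * Z2ᵀ)) :
    ∀ (a : Fin p1) (j : Fin (p2 - p1)),
      ((Z1 * Z1ᵀ)⁻¹ * Z1 * Z2ᵀ * (Z2 * Z2ᵀ)⁻¹) a (Sum.inr j) = 0 := by
  intro a j
  subst hZ2
  rw [Matrix.mul_assoc, Matrix.mul_assoc, ← Matrix.mul_assoc Z1,
    mul_transpose_fromRows_mul_inv Z1 Z3 hZ2inv, mul_fromCols, fromCols_apply_inr,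
    Matrix.mul_zero, Matrix.zero_apply]

/-- Block-matrix identity for nested design matrices completing
the proof of Theorem 2: if `Z2` is obtained by stacking `Z1` on top of `Z3`,
then the columns of `(Z1Z1ᵗ)⁻¹ Z1 Z2ᵗ (Z2Z2ᵗ)⁻¹` corresponding to the rows of
`Z3` vanish. -/
theorem stmt6 (n p1 p2 : ℕ) (hn : 0 < n) (hp1 : 0 < p1) (hp2 : 0 < p2) (h12 : p1 ≤ p2)
    (Z1 : Matrix (Fin p1) (Fin n) ℝ) (Z3 : Matrix (Fin (p2 - p1)) (Fin n) ℝ)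
    (Z2 : Matrix (Fin p1 ⊕ Fin (p2 - p1)) (Fin n) ℝ) (hZ2 : Z2 = Matrix.fromRows Z1 Z3)
    (hZ1inv : IsUnit (Z1 * Z1ᵀ)) (hZ2inv : IsUnit (Z2 * Z2ᵀ)) :
    ∀ (a : Fin p1) (j : Fin (p2 - p1)),
      ((Z1 * Z1ᵀ)⁻¹ * Z1 * Z2ᵀ * (Z2 * Z2ᵀ)⁻¹) a (Sum.inr j) = 0 :=
  stmt6_general n p1 p2 Z1 Z3 Z2 hZ2 hZ2inv
end

section
/- Let x₂, x_j, x_k, x_ℓ be mutually independent real-valued random variables on a probability space, all square-integrable, with x_k x_ℓ square-integrable and E[x_j] = E[x_k] = E[x_ℓ] = 0, and let c : ℝ → ℝ be a bounded measurable function. Let X = (1, x₂, x_j, x_k, x_ℓ, x_k·x_ℓ)ᵗ ∈ ℝ⁶, assume all entries of Σ_c = E[c(x₂) · XXᵗ] are finite, and let E₂ be the 6×5 coordinate-selection matrix whose columns are the standard basis vectors e₁, e₂, e₄, e₅, e₆ of ℝ⁶. Then E₂E₂ᵗ Σ_c E₂ = Σ_c E₂. -/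
/-!
Independence and centring of `x_j` make every entry `E[c(x₂) x_j X_b]`, `b ≠ j`, of the row of
`Σ_c` indexed by `x_j` equal to `E[x_j] · E[c(x₂) X_b] = 0`, since `c(x₂) X_b` is a function of
`(x₂, x_k, x_ℓ)` alone. The projection `E₂E₂ᵗ` only deletes the `x_j` row of `Σ_c E₂`, whose
entries are exactly these vanishing ones.
-/

open Matrix MeasureTheory ProbabilityTheory

theorem Matrix.selection_mul_transpose_mul_mul_selection {m n R : Type*} [Fintype m] [Fintype n]
    [DecidableEq m] [Semiring R] {σ : n → m} (hσ : Function.Injective σ) {E : Matrix m n R}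
    (hE : ∀ i j, E i j = if i = σ j then 1 else 0) {M : Matrix m m R}
    (hM : ∀ i, (∀ j, i ≠ σ j) → ∀ j, M i (σ j) = 0) :
    E * Eᵀ * M * E = M * E := by
  have hright : ∀ (B : Matrix m m R) i j, (B * E) i j = B i (σ j) := by
    intro B i j
    simp [mul_apply, hE]
  have hleft : ∀ (B : Matrix m n R) j k, (Eᵀ * B) j k = B (σ j) k := by
    intro B j k
    simp [mul_apply, hE]
  rw [Matrix.mul_assoc, Matrix.mul_assoc]
  ext i k
  by_cases hi : ∃ j, i = σ j
  · obtain ⟨j, rfl⟩ := hi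
    rw [mul_apply, Finset.sum_eq_single j (fun j' _ hj' => by simp [hE, hσ.ne hj'.symm])
      (by simp), hE, if_pos rfl, one_mul, hleft]
  · simp only [not_exists] at hi
    rw [mul_apply, Finset.sum_eq_zero (fun j _ => by simp [hE, hi j]), hright, hM i hi]

theorem ProbabilityTheory.IndepFun.integral_mul_comp_eq_zero {Ω β : Type*} [MeasurableSpace Ω]
    [MeasurableSpace β] {P : Measure Ω} {X : Ω → ℝ} {Y : Ω → β} (hXY : IndepFun X Y P)
    (hX : AEStronglyMeasurable X P) (hY : Measurable Y) (hmean : ∫ ω, X ω ∂P = 0)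
    {φ : β → ℝ} (hφ : Measurable φ) :
    ∫ ω, X ω * φ (Y ω) ∂P = 0 := by
  have := (hXY.comp measurable_id hφ).integral_mul_eq_mul_integral hX
    (hφ.comp hY).aestronglyMeasurable
  simpa [hmean] using this

theorem ProbabilityTheory.iIndepFun.integral_mul_comp_eq_zero {Ω ι : Type*} [MeasurableSpace Ω]
    {P : Measure Ω} [Fintype ι] [DecidableEq ι] {f : ι → Ω → ℝ} (hf : iIndepFun f P)
    (hmeas : ∀ k, Measurable (f k)) {i : ι} (hmean : ∫ ω, f i ω ∂P = 0)
    {φ : (ι → ℝ) → ℝ} (hφ : Measurable φ) (hφi : ∀ v w, (∀ k ≠ i, v k = w k) → φ v = φ w) :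
    ∫ ω, f i ω * φ (fun k => f k ω) ∂P = 0 := by
  have hmem : ∀ k, k ≠ i → k ∈ ({i}ᶜ : Finset ι) := fun k hk => by simpa using hk
  let Y : Ω → ({i}ᶜ : Finset ι) → ℝ := fun ω k => f k ω
  let ψ : (({i}ᶜ : Finset ι) → ℝ) → ℝ :=
    fun w => φ (fun k => if hk : k = i then 0 else w ⟨k, hmem k hk⟩)
  have hY : Measurable Y := measurable_pi_lambda _ fun k => hmeas k
  have hψ : Measurable ψ := by
    refine hφ.comp (measurable_pi_lambda _ fun k => ?_)
    by_cases hk : k = i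
    · simp only [hk, dite_true, measurable_const]
    · simp only [hk, dite_false]
      exact measurable_pi_apply _
  have hindep : IndepFun (f i) Y P :=
    (hf.indepFun_finset {i} {i}ᶜ disjoint_compl_right hmeas).comp
      (measurable_pi_apply (⟨i, Finset.mem_singleton_self i⟩ : ({i} : Finset ι))) measurable_id
  have hφY : ∀ ω, φ (fun k => f k ω) = ψ (Y ω) := fun ω =>
    hφi _ _ fun k hk => by simp [Y, hk]
  simp_rw [hφY]
  exact hindep.integral_mul_comp_eq_zero (hmeas i).aestronglyMeasurable hY hmean hψ

/-- The covariate vector `X` as a function of `v = (x₂, x_j, x_k, x_ℓ)`. -/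
def designVector (v : Fin 4 → ℝ) : Fin 6 → ℝ := ![1, v 0, v 1, v 2, v 3, v 2 * v 3]

theorem designVector_eq_of_eq_off_one {v w : Fin 4 → ℝ} (hvw : ∀ k ≠ 1, v k = w k) {b : Fin 6}
    (hb : b ≠ 2) : designVector v b = designVector w b := by
  fin_cases b <;> simp_all [designVector]

theorem stmt13_general {Ω : Type*} [MeasurableSpace Ω] (P : Measure Ω)
    (x2 xj xk xl : Ω → ℝ)
    (hmeas2 : Measurable x2) (hmeasj : Measurable xj)
    (hmeask : Measurable xk) (hmeasl : Measurable xl)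
    (hindep : iIndepFun ![x2, xj, xk, xl] P)
    (hmeanj : ∫ ω, xj ω ∂P = 0)
    (c : ℝ → ℝ) (hcmeas : Measurable c)
    (X : Ω → Fin 6 → ℝ)
    (hX : ∀ ω, X ω = ![1, x2 ω, xj ω, xk ω, xl ω, xk ω * xl ω])
    (Sig : Matrix (Fin 6) (Fin 6) ℝ)
    (hSig : ∀ a b, Sig a b = ∫ ω, c (x2 ω) * (X ω a * X ω b) ∂P)
    (E₂ : Matrix (Fin 6) (Fin 5) ℝ)
    (hE₂ : ∀ i j, E₂ i j = if i = ![0, 1, 3, 4, 5] j then 1 else 0) :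
    E₂ * E₂ᵀ * Sig * E₂ = Sig * E₂ := by
  have hmeas : ∀ k, Measurable (![x2, xj, xk, xl] k) := by
    intro k
    fin_cases k <;> assumption
  have hrow : ∀ b ≠ 2, Sig 2 b = 0 := by
    intro b hb
    have hφ : Measurable fun v : Fin 4 → ℝ => c (v 0) * designVector v b :=
      (hcmeas.comp (measurable_pi_apply 0)).mul ((measurable_pi_apply b).comp (by fun_prop))
    have := hindep.integral_mul_comp_eq_zero hmeas (i := 1) hmeanj hφ
      fun v w hvw => by rw [hvw 0 (by decide), designVector_eq_of_eq_off_one hvw hb]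
    rw [hSig, ← this]
    congr 1 with ω
    simp only [hX, designVector, cons_val, cons_val_one, cons_val_zero]
    ring
  refine Matrix.selection_mul_transpose_mul_mul_selection (by decide) hE₂ fun i hi j => ?_
  obtain rfl : i = 2 := by revert i; decide
  exact hrow _ (by revert j; decide)

/-- Verification, for GLMs such as the logistic and Poisson
models, of the structural hypothesis `E₂E₂ᵗ Σ_c E₂ = Σ_c E₂` of the mixed
pairwise independence lemma: the weighted Gram matrix
`Σ_c = E[c(x₂) XXᵗ]` with bounded measurable weight `c` depending only on the
fixed covariate `x₂` satisfies the condition, where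
`X = (1, x₂, x_j, x_k, x_ℓ, x_k x_ℓ)ᵗ` and `E₂` selects `e₁, e₂, e₄, e₅, e₆`. -/
theorem stmt13 {Ω : Type*} [MeasurableSpace Ω] (P : Measure Ω) [IsProbabilityMeasure P]
    (x2 xj xk xl : Ω → ℝ)
    (hmeas2 : Measurable x2) (hmeasj : Measurable xj)
    (hmeask : Measurable xk) (hmeasl : Measurable xl)
    (hindep : iIndepFun ![x2, xj, xk, xl] P)
    (hL2 : ∀ f ∈ ({x2, xj, xk, xl} : Set (Ω → ℝ)), MemLp f 2 P)
    (hL2kl : MemLp (fun ω => xk ω * xl ω) 2 P)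
    (hmeanj : ∫ ω, xj ω ∂P = 0) (hmeank : ∫ ω, xk ω ∂P = 0)
    (hmeanl : ∫ ω, xl ω ∂P = 0)
    (c : ℝ → ℝ) (hcmeas : Measurable c) (hcbdd : ∃ C, ∀ x, |c x| ≤ C)
    (X : Ω → Fin 6 → ℝ)
    (hX : ∀ ω, X ω = ![1, x2 ω, xj ω, xk ω, xl ω, xk ω * xl ω])
    (hint : ∀ a b, Integrable (fun ω => c (x2 ω) * (X ω a * X ω b)) P)
    (Sig : Matrix (Fin 6) (Fin 6) ℝ)
    (hSig : ∀ a b, Sig a b = ∫ ω, c (x2 ω) * (X ω a * X ω b) ∂P)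
    (E₂ : Matrix (Fin 6) (Fin 5) ℝ)
    (hE₂ : ∀ i j, E₂ i j = if i = ![0, 1, 3, 4, 5] j then 1 else 0) :
    E₂ * E₂ᵀ * Sig * E₂ = Sig * E₂ :=
  stmt13_general P x2 xj xk xl hmeas2 hmeasj hmeask hmeasl hindep hmeanj c hcmeas X hX Sig hSig E₂
    hE₂
end
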